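/- arXiv:1406.3781 — 2 statements merged into one kernel-verified Lean document; each statement's English description precedes it below -/
import Mathlib

section
/- Let Z be a real random variable taking values in [-1, 1] almost surely, let n be a positive integer and a > 0 with E[Z] = a/n, and suppose E[exp(-η Z)] = 1 for some η > 0. If a/n < (exp(η) + exp(-η) - 2)/(exp(η) - exp(-η)), then E[exp(-(η/2) Z)] ≤ 1 - 0.18 η a / n when η ≤ 1, and E[exp(-(η/2) Z)] ≤ 1 - 0.21 a / n when η > 1. In particular, E[exp(-(η/2) Z)] ≤ 1 - 0.18 · min(η, 1) · a / n. -/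
/-!
For `β ≥ 1/4` the function `F v = β v² - v + (1 - 2β) log v + (1 - β)` vanishes at `v = 1` and
has derivative `(v - 1)(2βv - (1 - 2β)) / v`, whose zeros are `1` and `(1 - 2β)/(2β) ≤ 1`.
Hence `F ≥ 0` on `[(1 - 2β)/(2β), ∞)`, and `F` increases below that point, so `F (exp (-η/2)) ≥ 0`
gives `F ≥ 0` on `[exp (-η/2), ∞)`. Evaluating at `v = exp (-η Z / 2)`, which is `≥ exp (-η/2)`
as `Z ≤ 1`, and integrating with `E exp (-η Z) = 1` yields `E exp (-η Z / 2) ≤ 1 - η (1/2 - β) E Z`.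

For `η ≤ 1` take `β = 0.32`, whose critical point `9/16` lies below `exp (-1/2)`. For `η > 1`
take `β = 1/2 - 0.21/η`; then `2η F (exp (-η/2))` is
`G η = 0.58 η + 0.42 + (η - 0.42) exp (-η) - 2η exp (-η/2)`, which increases on `[1, ∞)`
with `G 1 > 0`.
-/

open MeasureTheory Real Set

/-- `0 ≤ mixGap β v` is `v ≤ (1 - β) + β v² + (1 - 2β) log v`, which at `v = exp (-(η/2) x)`
reads `exp (-(η/2) x) ≤ (1 - β) + β exp (-η x) - η (1/2 - β) x`. -/
noncomputable def mixGap (β v : ℝ) : ℝ := β * v ^ 2 - v + (1 - 2 * β) * log v + (1 - β)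

section mixGap

variable {β : ℝ}

lemma mixGap_one (β : ℝ) : mixGap β 1 = 0 := by
  simp only [mixGap, one_pow, log_one]; ring

lemma hasDerivAt_mixGap (β : ℝ) {v : ℝ} (hv : 0 < v) :
    HasDerivAt (mixGap β) ((v - 1) * (2 * β * v - (1 - 2 * β)) / v) v := by
  have h := ((((hasDerivAt_pow 2 v).const_mul β).sub (hasDerivAt_id v)).add
    ((hasDerivAt_log hv.ne').const_mul (1 - 2 * β))).add_const (1 - β)
  refine h.congr_deriv ?_
  field_simp
  ring

lemma mixGap_monotoneOn {a b : ℝ} (ha : 0 < a)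
    (h : ∀ x ∈ Ioo a b, 0 ≤ (x - 1) * (2 * β * x - (1 - 2 * β))) :
    MonotoneOn (mixGap β) (Icc a b) := by
  refine monotoneOn_of_hasDerivWithinAt_nonneg
    (f' := fun x => (x - 1) * (2 * β * x - (1 - 2 * β)) / x) (convex_Icc a b)
    (fun x hx => (hasDerivAt_mixGap β (ha.trans_le hx.1)).continuousAt.continuousWithinAt)
    ?_ ?_ <;> rw [interior_Icc]
  · exact fun x hx => (hasDerivAt_mixGap β (ha.trans hx.1)).hasDerivWithinAt
  · exact fun x hx => div_nonneg (h x hx) (ha.trans hx.1).le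

lemma mixGap_antitoneOn {a b : ℝ} (ha : 0 < a)
    (h : ∀ x ∈ Ioo a b, (x - 1) * (2 * β * x - (1 - 2 * β)) ≤ 0) :
    AntitoneOn (mixGap β) (Icc a b) := by
  refine antitoneOn_of_hasDerivWithinAt_nonpos
    (f' := fun x => (x - 1) * (2 * β * x - (1 - 2 * β)) / x) (convex_Icc a b)
    (fun x hx => (hasDerivAt_mixGap β (ha.trans_le hx.1)).continuousAt.continuousWithinAt)
    ?_ ?_ <;> rw [interior_Icc]
  · exact fun x hx => (hasDerivAt_mixGap β (ha.trans hx.1)).hasDerivWithinAt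
  · exact fun x hx => div_nonpos_of_nonpos_of_nonneg (h x hx) (ha.trans hx.1).le

lemma mixGap_nonneg (hβ : 1 / 4 ≤ β) {v : ℝ} (hv : 0 < v) (hvβ : 1 - 2 * β ≤ 2 * β * v) :
    0 ≤ mixGap β v := by
  rw [← mixGap_one β]
  rcases le_total 1 v with h1 | h1
  · refine mixGap_monotoneOn one_pos (fun x hx => ?_) (left_mem_Icc.2 h1) (right_mem_Icc.2 h1) h1
    exact mul_nonneg (by linarith [hx.1]) (by nlinarith [hx.1])
  · refine mixGap_antitoneOn hv (fun x hx => ?_) (left_mem_Icc.2 h1) (right_mem_Icc.2 h1) h1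
    exact mul_nonpos_of_nonpos_of_nonneg (by linarith [hx.2]) (by nlinarith [hx.1])

lemma mixGap_nonneg_of_le (hβ : 1 / 4 ≤ β) {v₀ v : ℝ} (hv₀ : 0 < v₀) (hle : v₀ ≤ v)
    (h₀ : 0 ≤ mixGap β v₀) : 0 ≤ mixGap β v := by
  rcases le_or_gt (1 - 2 * β) (2 * β * v) with hvβ | hvβ
  · exact mixGap_nonneg hβ (hv₀.trans_le hle) hvβ
  · -- `v` lies below the critical point `(1 - 2β)/(2β) ≤ 1`, where `mixGap β` increases
    refine h₀.trans (mixGap_monotoneOn hv₀ (fun x hx => ?_) (left_mem_Icc.2 hle)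
      (right_mem_Icc.2 hle) hle)
    exact mul_nonneg_of_nonpos_of_nonpos (by nlinarith [hx.2]) (by nlinarith [hx.2])

lemma exp_neg_half_mul_le (hβ : 1 / 4 ≤ β) {η x : ℝ} (hη : 0 ≤ η) (hx : x ≤ 1)
    (hgap : 0 ≤ mixGap β (exp (-(η / 2)))) :
    exp (-(η / 2) * x) ≤ (1 - β) + β * exp (-η * x) - η * (1 / 2 - β) * x := by
  have hv : exp (-(η / 2)) ≤ exp (-(η / 2) * x) := exp_le_exp.2 (by nlinarith)
  have h := mixGap_nonneg_of_le hβ (exp_pos _) hv hgap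
  rw [mixGap, log_exp, sq, ← exp_add] at h
  have hsum : -(η / 2) * x + -(η / 2) * x = -η * x := by ring
  rw [hsum] at h
  linarith

end mixGap

lemma exp_neg_half_sq : exp (-(1 / 2)) ^ 2 = exp (-1) := by
  rw [sq, ← exp_add]; norm_num

lemma nine_div_sixteen_le_exp_neg_half : (9 / 16 : ℝ) ≤ exp (-(1 / 2)) := by
  nlinarith [exp_neg_half_sq, exp_neg_one_gt_d9, exp_pos (-(1 / 2))]

lemma two_mul_mul_exp_neg_half_le {η : ℝ} (hη : 1 ≤ η) :
    2 * η * exp (-(η / 2)) ≤ 0.58 * η + 0.42 + (η - 0.42) * exp (-η) := by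
  set G : ℝ → ℝ := fun x => 0.58 * x + 0.42 + (x - 0.42) * exp (-x) - 2 * x * exp (-(x / 2))
  have hG (x : ℝ) :
      HasDerivAt G (0.58 + (1.42 - x) * exp (-x) + (x - 2) * exp (-(x / 2))) x := by
    have h := ((((hasDerivAt_id x).const_mul 0.58).add_const 0.42).add
      (((hasDerivAt_id x).sub_const 0.42).mul (hasDerivAt_neg x).exp)).sub
      (((hasDerivAt_id x).const_mul 2).mul ((hasDerivAt_id x).div_const 2).neg.exp)
    refine h.congr_deriv ?_
    simp only [id, Pi.neg_apply]
    ring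
  have hmono : MonotoneOn G (Ici 1) := by
    refine monotoneOn_of_hasDerivWithinAt_nonneg (convex_Ici 1)
      (fun x _ => (hG x).continuousAt.continuousWithinAt) (fun x _ => (hG x).hasDerivWithinAt) ?_
    rw [interior_Ici]
    intro x hx
    set w := exp (-(x / 2))
    have hw0 : 0 < w := exp_pos _
    have hw1 : w < 1 := exp_lt_one_iff.2 (by linarith [mem_Ioi.1 hx])
    have hsq : exp (-x) = w ^ 2 := by rw [sq, ← exp_add]; ring_nf
    -- with `w = exp (-x/2)` the derivative factors as `(1-w)(0.58-0.42w) + (x-1)w(1-w)`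
    rw [hsq]
    nlinarith [mul_pos (mul_pos (sub_pos.2 (mem_Ioi.1 hx)) hw0) (sub_pos.2 hw1),
      mul_pos (sub_pos.2 hw1) (by linarith : (0 : ℝ) < 0.58 - 0.42 * w)]
  -- `G 1 ≈ 3 * 10⁻⁴`, so the nine-digit bounds on `exp (-1)` are needed
  have hG1 : 0 ≤ G 1 := by
    have hw : exp (-(1 / 2)) ≤ 0.6066 := by
      nlinarith [exp_neg_half_sq, exp_neg_one_lt_d9, exp_pos (-(1 / 2))]
    simp only [G]
    linarith [exp_neg_one_gt_d9]
  have := hG1.trans (hmono self_mem_Ici hη hη)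
  simp only [G] at this
  linarith

lemma mixGap_nonneg_of_le_one {η : ℝ} (h1 : η ≤ 1) : 0 ≤ mixGap 0.32 (exp (-(η / 2))) := by
  refine mixGap_nonneg (by norm_num) (exp_pos _) ?_
  have := exp_le_exp.2 (show -(1 / 2) ≤ -(η / 2) by linarith)
  linarith [nine_div_sixteen_le_exp_neg_half]

lemma mixGap_nonneg_of_one_lt {η : ℝ} (h1 : 1 < η) :
    0 ≤ mixGap (1 / 2 - 0.21 / η) (exp (-(η / 2))) := by
  have hη : 0 < η := one_pos.trans h1
  have hsq : exp (-(η / 2)) ^ 2 = exp (-η) := by rw [sq, ← exp_add]; ring_nf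
  have key : 2 * η * mixGap (1 / 2 - 0.21 / η) (exp (-(η / 2))) =
      0.58 * η + 0.42 + (η - 0.42) * exp (-η) - 2 * η * exp (-(η / 2)) := by
    rw [mixGap, log_exp, hsq]
    field_simp
    ring
  refine nonneg_of_mul_nonneg_right (a := 2 * η) ?_ (by positivity)
  rw [key]
  linarith [two_mul_mul_exp_neg_half_le h1.le]

lemma integral_exp_neg_half_mul_le {Ω : Type*} [MeasurableSpace Ω] {μ : Measure Ω}
    [IsProbabilityMeasure μ] {Z : Ω → ℝ} (hZ : Measurable Z)
    (hZbdd : ∀ᵐ ω ∂μ, Z ω ∈ Icc (-1 : ℝ) 1) {β η : ℝ} (hβ : 1 / 4 ≤ β)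
    (hη : 0 ≤ η) (hcgf : ∫ ω, exp (-η * Z ω) ∂μ = 1)
    (hgap : 0 ≤ mixGap β (exp (-(η / 2)))) :
    ∫ ω, exp (-(η / 2) * Z ω) ∂μ ≤ 1 - η * (1 / 2 - β) * ∫ ω, Z ω ∂μ := by
  have hZint : Integrable Z μ :=
    .of_bound hZ.aestronglyMeasurable 1 (by filter_upwards [hZbdd] with ω h using abs_le.2 h)
  have hexp (c : ℝ) : Integrable (fun ω => exp (c * Z ω)) μ := by
    refine .of_bound (hZ.const_mul c).exp.aestronglyMeasurable (exp |c|) ?_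
    filter_upwards [hZbdd] with ω h
    rw [norm_eq_abs, abs_exp]
    exact exp_le_exp.2 ((le_abs_self _).trans (by
      rw [abs_mul]; exact mul_le_of_le_one_right (abs_nonneg c) (abs_le.2 h)))
  have hrhs : Integrable (fun ω => (1 - β) + β * exp (-η * Z ω)) μ :=
    (integrable_const _).add ((hexp _).const_mul β)
  calc ∫ ω, exp (-(η / 2) * Z ω) ∂μ
      ≤ ∫ ω, ((1 - β) + β * exp (-η * Z ω) - η * (1 / 2 - β) * Z ω) ∂μ :=
        integral_mono_ae (hexp _) (hrhs.sub (hZint.const_mul _)) (by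
          filter_upwards [hZbdd] with ω h using exp_neg_half_mul_le hβ hη h.2 hgap)
    _ = 1 - η * (1 / 2 - β) * ∫ ω, Z ω ∂μ := by
        rw [integral_sub hrhs (hZint.const_mul _), integral_add (integrable_const _)
          ((hexp _).const_mul β), integral_const, integral_const_mul, integral_const_mul, hcgf]
        simp

theorem stochastic_mixability_concentration_general
    {Ω : Type*} [MeasurableSpace Ω] (μ : Measure Ω) [IsProbabilityMeasure μ]
    (Z : Ω → ℝ) (hZmeas : Measurable Z)
    (hZbdd : ∀ᵐ ω ∂μ, Z ω ∈ Set.Icc (-1 : ℝ) 1)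
    (n : ℕ) (a : ℝ) (ha : 0 < a)
    (hmean : ∫ ω, Z ω ∂μ = a / n)
    (η : ℝ) (hη : 0 < η)
    (hcgf : ∫ ω, Real.exp (-η * Z ω) ∂μ = 1) :
    (η ≤ 1 → ∫ ω, Real.exp (-(η / 2) * Z ω) ∂μ ≤ 1 - 0.18 * η * a / n)
    ∧ (1 < η → ∫ ω, Real.exp (-(η / 2) * Z ω) ∂μ ≤ 1 - 0.21 * a / n)
    ∧ ∫ ω, Real.exp (-(η / 2) * Z ω) ∂μ ≤ 1 - 0.18 * min η 1 * a / n := by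
  have bound {β : ℝ} (hβ : 1 / 4 ≤ β) (hgap : 0 ≤ mixGap β (exp (-(η / 2)))) :
      ∫ ω, exp (-(η / 2) * Z ω) ∂μ ≤ 1 - η * (1 / 2 - β) * (a / n) :=
    hmean ▸ integral_exp_neg_half_mul_le hZmeas hZbdd hβ hη.le hcgf hgap
  have small (h : η ≤ 1) : ∫ ω, exp (-(η / 2) * Z ω) ∂μ ≤ 1 - 0.18 * η * a / n :=
    (bound (by norm_num) (mixGap_nonneg_of_le_one h)).trans_eq (by ring)
  have large (h : 1 < η) : ∫ ω, exp (-(η / 2) * Z ω) ∂μ ≤ 1 - 0.21 * a / n := by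
    have hβ : 1 / 4 ≤ 1 / 2 - 0.21 / η := by
      rw [le_sub_comm, div_le_iff₀ hη]; linarith
    refine (bound hβ (mixGap_nonneg_of_one_lt h)).trans_eq ?_
    field_simp
    ring
  refine ⟨small, large, ?_⟩
  rcases le_or_gt η 1 with h | h
  · simpa only [min_eq_left h] using small h
  · have hlarge := large h
    have : 0 ≤ a / n := by positivity
    rw [min_eq_right h.le, mul_one, mul_div_assoc]
    rw [mul_div_assoc] at hlarge
    linarith

/-- **Stochastic mixability concentration.**
Let `Z` take values in `[-1, 1]` a.s. with `E[Z] = a/n` for `a > 0`, and suppose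
`E[exp(-η Z)] = 1` for some `η > 0`.  If `a/n < (exp η + exp(-η) - 2)/(exp η - exp(-η))`
then `E[exp(-(η/2) Z)] ≤ 1 - 0.18 η a / n` when `η ≤ 1`, and
`E[exp(-(η/2) Z)] ≤ 1 - 0.21 a / n` when `η > 1`; in particular
`E[exp(-(η/2) Z)] ≤ 1 - 0.18 min(η,1) a / n`. -/
theorem stochastic_mixability_concentration
    {Ω : Type*} [MeasurableSpace Ω] (μ : Measure Ω) [IsProbabilityMeasure μ]
    (Z : Ω → ℝ) (hZmeas : Measurable Z)
    (hZbdd : ∀ᵐ ω ∂μ, Z ω ∈ Set.Icc (-1 : ℝ) 1)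
    (n : ℕ) (hn : 0 < n) (a : ℝ) (ha : 0 < a)
    (hmean : ∫ ω, Z ω ∂μ = a / n)
    (η : ℝ) (hη : 0 < η)
    (hcgf : ∫ ω, Real.exp (-η * Z ω) ∂μ = 1)
    (hint : a / n < (Real.exp η + Real.exp (-η) - 2) / (Real.exp η - Real.exp (-η))) :
    (η ≤ 1 → ∫ ω, Real.exp (-(η / 2) * Z ω) ∂μ ≤ 1 - 0.18 * η * a / n)
    ∧ (1 < η → ∫ ω, Real.exp (-(η / 2) * Z ω) ∂μ ≤ 1 - 0.21 * a / n)
    ∧ ∫ ω, Real.exp (-(η / 2) * Z ω) ∂μ ≤ 1 - 0.18 * min η 1 * a / n :=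
  stochastic_mixability_concentration_general μ Z hZmeas hZbdd n a ha hmean η hη hcgf
end

section
/- Let η > 0 and let X be a real random variable taking values in [-1, 1] almost surely with E[exp(η X)] = 1. Then -E[X] ≤ (cosh(η) - 1)/sinh(η). -/
open MeasureTheory ProbabilityTheory Real

/- On `[-1, 1]` the convex function `x ↦ exp (t * x)` lies below its chord through `x = ±1`,
which is `cosh t + sinh t * x`. Averaging gives `1 = E[exp (η X)] ≤ cosh η + sinh η * E[X]`,
and dividing by `sinh η > 0` gives the bound. -/

lemma Real.exp_mul_le_cosh_add_sinh_mul (t : ℝ) {x : ℝ} (hx : x ∈ Set.Icc (-1 : ℝ) 1) :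
    exp (t * x) ≤ cosh t + sinh t * x := by
  have hl : 0 ≤ (1 - x) / 2 := by linarith [hx.2]
  have hr : 0 ≤ (1 + x) / 2 := by linarith [hx.1]
  have hchord := convexOn_exp.2 (Set.mem_univ (-t)) (Set.mem_univ t) hl hr (by ring)
  rw [smul_eq_mul, smul_eq_mul, smul_eq_mul] at hchord
  calc exp (t * x) = exp ((1 - x) / 2 * -t + (1 + x) / 2 * t) := by ring_nf
    _ ≤ (1 - x) / 2 * exp (-t) + (1 + x) / 2 * exp t := hchord
    _ = cosh t + sinh t * x := by rw [cosh_eq, sinh_eq]; ring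

lemma ProbabilityTheory.mgf_le_cosh_add_sinh_mul_integral {Ω : Type*} [MeasurableSpace Ω]
    {μ : Measure Ω} [IsProbabilityMeasure μ] {X : Ω → ℝ} (hXmeas : AEMeasurable X μ)
    (hXbdd : ∀ᵐ ω ∂μ, X ω ∈ Set.Icc (-1 : ℝ) 1) (t : ℝ) :
    mgf X μ t ≤ cosh t + sinh t * μ[X] := by
  have hXint : Integrable X μ := .of_mem_Icc (-1) 1 hXmeas hXbdd
  calc mgf X μ t ≤ ∫ ω, cosh t + sinh t * X ω ∂μ :=
        integral_mono_ae (integrable_exp_mul_of_mem_Icc hXmeas hXbdd)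
          ((integrable_const _).add (hXint.const_mul _))
          (hXbdd.mono fun ω hω ↦ exp_mul_le_cosh_add_sinh_mul t hω)
    _ = cosh t + sinh t * μ[X] := by
        rw [integral_add (integrable_const _) (hXint.const_mul _), integral_const,
          integral_const_mul, probReal_univ, one_smul]

/-- **Moment feasibility bound.**
If `X` takes values in `[-1, 1]` almost surely and `E[exp(η X)] = 1` for some
`η > 0`, then `-E[X] ≤ (cosh η - 1) / sinh η`. -/
theorem moment_feasibility_bound
    {Ω : Type*} [MeasurableSpace Ω] (μ : Measure Ω) [IsProbabilityMeasure μ]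
    (X : Ω → ℝ) (hXmeas : Measurable X)
    (hXbdd : ∀ᵐ ω ∂μ, X ω ∈ Set.Icc (-1 : ℝ) 1)
    (η : ℝ) (hη : 0 < η)
    (hmoment : ∫ ω, Real.exp (η * X ω) ∂μ = 1) :
    -(∫ ω, X ω ∂μ) ≤ (Real.cosh η - 1) / Real.sinh η := by
  have hchord : 1 ≤ cosh η + sinh η * μ[X] :=
    hmoment ▸ mgf_le_cosh_add_sinh_mul_integral hXmeas.aemeasurable hXbdd η
  rw [le_div_iff₀ (sinh_pos_iff.2 hη)]
  linarith
end
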